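/- arXiv:1709.03068 — 5 statements merged into one kernel-verified Lean document; each statement's English description precedes it below -/
import Mathlib

section
/- Let $V' \subseteq V$ be vector spaces of polynomials (viewed as subspaces of the span of multilinear monomials). If a weight assignment $\mathrm{wt}$ is a basis isolating weight assignment (BIWA) for $V$, then $\mathrm{wt}$ is also a BIWA for $V'$. (A weight assignment $\mathrm{wt}: \mathrm{Mons} \to \mathbb{N}^k$ is a BIWA for $V$ if there exists a set $B$ of monomials indexing a column basis of $V$ such that distinct monomials in $B$ receive distinct weights, and every column indexed by a monomial outside $B$ lies in the span of columns indexed by monomials in $B$ of strictly smaller weight under lexicographic order.) -/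
/-- Lexicographic order on weight tuples in `ℕ^k`. -/
def LexLt {k : ℕ} (a b : Fin k → ℕ) : Prop :=
  ∃ i : Fin k, (∀ j : Fin k, j < i → a j = b j) ∧ a i < b i

/-- The column of the (matrix associated to the) space `V` of polynomials indexed by the
monomial `m`: the linear functional sending a polynomial in `V` to its coefficient at `m`. -/
def col {F Mon : Type*} [Field F] (V : Submodule F (Mon → F)) (m : Mon) :
    V →ₗ[F] F :=
  (LinearMap.proj m).comp V.subtype

/-- `wt` is a basis isolating weight assignment for the space `V` of polynomials:
there is a set `B` of monomials indexing a basis of the column space of `V` such that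
distinct monomials of `B` get distinct weights, and every column outside `B` is in the
span of the columns of `B` of strictly smaller (lexicographic) weight. -/
def IsBIWA {F Mon : Type*} [Field F] {k : ℕ}
    (wt : Mon → Fin k → ℕ) (V : Submodule F (Mon → F)) : Prop :=
  ∃ B : Set Mon,
    (∀ m₁ ∈ B, ∀ m₂ ∈ B, m₁ ≠ m₂ → wt m₁ ≠ wt m₂) ∧
    LinearIndependent F (fun m : B => col V (m : Mon)) ∧
    ∀ m : Mon, m ∉ B →
      col V m ∈ Submodule.span F (col V '' {m' | m' ∈ B ∧ LexLt (wt m') (wt m)})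

/-!
Precomposing with the inclusion `V' → V` is a linear map sending each column of `V` to the
corresponding column of `V'`, so every column of `V'` outside `B` still lies in the span of the
lighter columns of `B`; only linear independence can be lost. It is recovered by discarding from
`B` each monomial whose `V'`-column already lies in the span of the lighter columns of `B`: by
well-founded induction on the weight, the discarded columns stay in the span of the lighter kept
ones, and the kept columns are independent because each avoids the span of the lighter ones and
distinct kept monomials have distinct weights.
-/

open Submodule Set

section LowerSpan

variable {K M ι β : Type*} [DivisionRing K] [AddCommGroup M] [Module K M] [LinearOrder β]
  {v : ι → M} {w : ι → β}

theorem linearIndepOn_of_notMem_span_image_lower {s : Set ι} (hw : InjOn w s)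
    (h : ∀ i ∈ s, v i ∉ span K (v '' (s ∩ w ⁻¹' Iio (w i)))) : LinearIndepOn K v s := by
  classical
  refine linearIndepOn_of_finite s fun t hts ht => ?_
  lift t to Finset ι using ht
  induction t using Finset.induction_on_max_value w with
  | empty => simp
  | insert a t hat hmax ih =>
    rw [Finset.coe_insert] at hts ⊢
    obtain ⟨has, hts⟩ := insert_subset_iff.mp hts
    refine (ih hts).insert fun hspan => h a has (span_mono (image_mono ?_) hspan)
    intro j hj
    refine ⟨hts hj, (hmax j hj).lt_of_ne fun hja => ?_⟩
    exact hat (hw (hts hj) has hja ▸ hj)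

theorem exists_subset_notMem_span_image_lower [WellFoundedLT β] {B : Set ι}
    (hB : ∀ i ∉ B, v i ∈ span K (v '' (B ∩ w ⁻¹' Iio (w i)))) :
    ∃ B' ⊆ B, (∀ i ∈ B', v i ∉ span K (v '' (B' ∩ w ⁻¹' Iio (w i)))) ∧
      ∀ i ∉ B', v i ∈ span K (v '' (B' ∩ w ⁻¹' Iio (w i))) := by
  set B' := {i ∈ B | v i ∉ span K (v '' (B ∩ w ⁻¹' Iio (w i)))}
  have hB'B : B' ⊆ B := sep_subset B _
  have key (b : β) :
      span K (v '' (B ∩ w ⁻¹' Iio b)) ≤ span K (v '' (B' ∩ w ⁻¹' Iio b)) := by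
    induction b using WellFoundedLT.induction with
    | _ b ih =>
      refine span_le.mpr ?_
      rintro _ ⟨j, ⟨hjB, hjb⟩, rfl⟩
      by_cases hj : j ∈ B'
      · exact subset_span ⟨j, ⟨hj, hjb⟩, rfl⟩
      · have hjlow : v j ∈ span K (v '' (B ∩ w ⁻¹' Iio (w j))) :=
          not_not.mp fun hn => hj ⟨hjB, hn⟩
        refine span_mono (image_mono ?_) (ih (w j) hjb hjlow)
        exact inter_subset_inter_right _ (preimage_mono (Iio_subset_Iio hjb.le))
  refine ⟨B', hB'B, fun i hi hspan => hi.2 ?_, fun i hi => key _ ?_⟩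
  · exact span_mono (image_mono (inter_subset_inter_left _ hB'B)) hspan
  · by_cases hiB : i ∈ B
    · exact not_not.mp fun hn => hi ⟨hiB, hn⟩
    · exact hB i hiB

end LowerSpan

theorem col_mem_span_image_of_le {F Mon : Type*} [Field F] {V V' : Submodule F (Mon → F)}
    (hle : V' ≤ V) {m : Mon} {S : Set Mon} (h : col V m ∈ span F (col V '' S)) :
    col V' m ∈ span F (col V' '' S) := by
  have := apply_mem_span_image_of_mem_span (LinearMap.lcomp F F (inclusion hle)) h
  rwa [image_image] at this

/-- if `wt` is a BIWA for `V` and `V' ⊆ V`, then `wt` is a BIWA for `V'`. -/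
theorem biwa_of_subspace {F Mon : Type*} [Field F] {k : ℕ}
    (V V' : Submodule F (Mon → F)) (hle : V' ≤ V)
    (wt : Mon → Fin k → ℕ) (h : IsBIWA wt V) : IsBIWA wt V' := by
  obtain ⟨B, hdist, -, hspan⟩ := h
  obtain ⟨B', hB'B, hB'low, hB'span⟩ :=
    exists_subset_notMem_span_image_lower (K := F) (v := col V') (w := fun m => toLex (wt m))
      fun m hm => col_mem_span_image_of_le hle (hspan m hm)
  have hinj : InjOn (fun m => toLex (wt m)) B' := fun m₁ h₁ m₂ h₂ hw =>
    by_contra fun hne => hdist m₁ (hB'B h₁) m₂ (hB'B h₂) hne hw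
  exact ⟨B', fun m₁ h₁ m₂ h₂ => hdist m₁ (hB'B h₁) m₂ (hB'B h₂),
    linearIndepOn_of_notMem_span_image_lower hinj hB'low, hB'span⟩
end

section
/- Shuffling commutes with products in the following sense: if $f$ has degree $d_1$, $g$ has degree $d_2$, $\sigma_1 \in S_{d_1}$, $\sigma_2 \in S_{d_2}$, and $0 \le p \le d_2$, then there exists $\sigma \in S_{d_1+d_2}$, depending only on $\sigma_1, \sigma_2, p, d_1, d_2$ (not on $f$ or $g$), such that $\Delta_{\sigma_1}(f) \cdot \Delta_{\sigma_2}(g) = \Delta_\sigma(f \times_p g)$ for all homogeneous $f, g$ of the respective degrees. -/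
/-!
Every letter of `w` and of `v` lands at a definite position of `insWord p hp w v`, and these
positions fill `Fin (d₁ + d₂)` exactly once. So `insWord p hp w v = Sum.elim w v ∘ eₚ⁻¹` for an
equivalence `eₚ : Fin d₁ ⊕ Fin d₂ ≃ Fin (d₁ + d₂)`, and permuting the letters of `w` and `v` by
`σ₁` and `σ₂` and concatenating is the same as permuting the positions of `insWord p hp w v` by
`σ = eₚ ∘ (σ₁ ⊕ σ₂) ∘ e₀⁻¹`. Summing over words turns this identity of words into the claimed
identity of polynomials.
-/

/-- The shuffling map `Δ_σ` on homogeneous degree-`d` non-commutative polynomials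
(coefficient functions on words of length `d`); on words, `Δ_σ(x_w) = x_{w ∘ σ}`. -/
def shuffle {F : Type*} [Field F] {n d : ℕ} (σ : Equiv.Perm (Fin d)) :
    ((Fin d → Fin n) → F) →ₗ[F] ((Fin d → Fin n) → F) where
  toFun f := fun v => f (v ∘ σ.symm)
  map_add' := by intros; rfl
  map_smul' := by intros; rfl

/-- The word `x_{w_1}⋯x_{w_{d₁}} ×_p x_{v_1}⋯x_{v_{d₂}} =
`x_{v_1}⋯x_{v_p} x_{w_1}⋯x_{w_{d₁}} x_{v_{p+1}}⋯x_{v_{d₂}}`. -/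
def insWord {n d₁ d₂ : ℕ} (p : ℕ) (hp : p ≤ d₂) (w : Fin d₁ → Fin n)
    (v : Fin d₂ → Fin n) : Fin (d₁ + d₂) → Fin n := fun i =>
  if h : (i : ℕ) < p then v ⟨i, lt_of_lt_of_le h hp⟩
  else if h2 : (i : ℕ) < p + d₁ then w ⟨(i : ℕ) - p, by omega⟩
  else v ⟨(i : ℕ) - d₁, by have hi := i.isLt; omega⟩

/-- The bilinear product `×_p` on homogeneous non-commutative polynomials, extending
`insWord` on words.  `×_0` is the ordinary concatenation product. -/
def timesP {F : Type*} [Field F] {n d₁ d₂ : ℕ} (p : ℕ) (hp : p ≤ d₂)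
    (f : (Fin d₁ → Fin n) → F) (g : (Fin d₂ → Fin n) → F) :
    (Fin (d₁ + d₂) → Fin n) → F :=
  fun u => ∑ w : Fin d₁ → Fin n, ∑ v : Fin d₂ → Fin n,
    if insWord p hp w v = u then f w * g v else 0

def insPos {d₁ d₂ : ℕ} (p : ℕ) (hp : p ≤ d₂) : Fin d₁ ⊕ Fin d₂ → Fin (d₁ + d₂) :=
  Sum.elim (fun i => ⟨p + i, by omega⟩)
    (fun j => if (j : ℕ) < p then ⟨j, by omega⟩ else ⟨d₁ + j, by omega⟩)

theorem insWord_insPos {n d₁ d₂ : ℕ} (p : ℕ) (hp : p ≤ d₂) (w : Fin d₁ → Fin n)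
    (v : Fin d₂ → Fin n) (x : Fin d₁ ⊕ Fin d₂) :
    insWord p hp w v (insPos p hp x) = Sum.elim w v x := by
  rcases x with i | j
  · simp [insWord, insPos]
  · by_cases h : (j : ℕ) < p
    · simp [insWord, insPos, h]
    · simp only [insWord, insPos, Sum.elim_inr, h, if_false]
      rw [dif_neg (by omega), dif_neg (by omega)]
      simp

theorem insPos_injective {d₁ d₂ : ℕ} (p : ℕ) (hp : p ≤ d₂) :
    Function.Injective (insPos (d₁ := d₁) p hp) := by
  rintro (i | j) (i' | j') h <;> simp only [insPos, Sum.elim_inl, Sum.elim_inr] at h <;>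
    (try split_ifs at h) <;> simp [Fin.ext_iff] at h ⊢ <;> omega

noncomputable def insPosEquiv {d₁ d₂ : ℕ} (p : ℕ) (hp : p ≤ d₂) :
    Fin d₁ ⊕ Fin d₂ ≃ Fin (d₁ + d₂) :=
  Equiv.ofBijective _ ((Fintype.bijective_iff_injective_and_card _).mpr
    ⟨insPos_injective p hp, by simp⟩)

theorem insWord_eq_sumElim_comp {n d₁ d₂ : ℕ} (p : ℕ) (hp : p ≤ d₂) (w : Fin d₁ → Fin n)
    (v : Fin d₂ → Fin n) : insWord p hp w v = Sum.elim w v ∘ (insPosEquiv p hp).symm := by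
  rw [Equiv.eq_comp_symm]
  exact funext (insWord_insPos p hp w v)

noncomputable def mixPerm {d₁ d₂ : ℕ} (σ₁ : Equiv.Perm (Fin d₁)) (σ₂ : Equiv.Perm (Fin d₂))
    (p : ℕ) (hp : p ≤ d₂) : Equiv.Perm (Fin (d₁ + d₂)) :=
  (insPosEquiv 0 (Nat.zero_le d₂)).symm.trans ((Equiv.sumCongr σ₁ σ₂).trans (insPosEquiv p hp))

theorem insWord_comp_mixPerm {n d₁ d₂ : ℕ} (σ₁ : Equiv.Perm (Fin d₁))
    (σ₂ : Equiv.Perm (Fin d₂)) (p : ℕ) (hp : p ≤ d₂) (w : Fin d₁ → Fin n)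
    (v : Fin d₂ → Fin n) :
    insWord p hp w v ∘ mixPerm σ₁ σ₂ p hp = insWord 0 (Nat.zero_le d₂) (w ∘ σ₁) (v ∘ σ₂) := by
  rw [insWord_eq_sumElim_comp, insWord_eq_sumElim_comp, ← Sum.elim_comp_map]
  ext u
  simp [mixPerm]

theorem timesP_shuffle_shuffle_apply {F : Type*} [Field F] {n d₁ d₂ : ℕ}
    (σ₁ : Equiv.Perm (Fin d₁)) (σ₂ : Equiv.Perm (Fin d₂)) (p : ℕ) (hp : p ≤ d₂)
    (f : (Fin d₁ → Fin n) → F) (g : (Fin d₂ → Fin n) → F) (u : Fin (d₁ + d₂) → Fin n) :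
    timesP p hp (shuffle σ₁ f) (shuffle σ₂ g) u = ∑ w, ∑ v,
      if insWord p hp (w ∘ σ₁) (v ∘ σ₂) = u then f w * g v else 0 := by
  unfold timesP
  refine (Fintype.sum_bijective _ σ₁.bijective.comp_right _ _ fun w => ?_).symm
  refine Fintype.sum_bijective _ σ₂.bijective.comp_right _ _ fun v => ?_
  simp [shuffle, Function.comp_assoc]

theorem shuffle_timesP_apply {F : Type*} [Field F] {n d₁ d₂ : ℕ}
    (σ : Equiv.Perm (Fin (d₁ + d₂))) (p : ℕ) (hp : p ≤ d₂)
    (f : (Fin d₁ → Fin n) → F) (g : (Fin d₂ → Fin n) → F) (u : Fin (d₁ + d₂) → Fin n) :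
    shuffle σ (timesP p hp f g) u = ∑ w, ∑ v,
      if insWord p hp w v ∘ σ = u then f w * g v else 0 := by
  simp only [shuffle, timesP, LinearMap.coe_mk, AddHom.coe_mk, Equiv.eq_comp_symm]

/-- shuffling commutes with products: for `σ₁ ∈ S_{d₁}`, `σ₂ ∈ S_{d₂}` and
`0 ≤ p ≤ d₂` there is `σ ∈ S_{d₁+d₂}` (depending only on `σ₁, σ₂, p, d₁, d₂`) such that
`Δ_{σ₁}(f) ⋅ Δ_{σ₂}(g) = Δ_σ(f ×_p g)` for all homogeneous `f, g` of the respective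
degrees (where `⋅ = ×_0` is concatenation). -/
theorem shuffle_mul_eq_shuffle_timesP {F : Type*} [Field F] {n d₁ d₂ : ℕ}
    (σ₁ : Equiv.Perm (Fin d₁)) (σ₂ : Equiv.Perm (Fin d₂)) (p : ℕ) (hp : p ≤ d₂) :
    ∃ σ : Equiv.Perm (Fin (d₁ + d₂)),
      ∀ (f : (Fin d₁ → Fin n) → F) (g : (Fin d₂ → Fin n) → F),
        timesP 0 (Nat.zero_le d₂) (shuffle σ₁ f) (shuffle σ₂ g)
          = shuffle σ (timesP p hp f g) := by
  refine ⟨mixPerm σ₁ σ₂ p hp, fun f g => funext fun u => ?_⟩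
  simp only [timesP_shuffle_shuffle_apply, shuffle_timesP_apply, insWord_comp_mixPerm]
end

section
/- Let $T_d$ be the complete binary tree of depth $d$, which has $D = 2^{d+1}-1$ nodes. Let $k \le D$ be the number whose binary expansion is $1010\cdots$ (alternating bits starting with 1, of length $d+1$). Then every subset $A$ of the vertices of $T_d$ with $|A| = k$ has edge boundary $|E(A, \bar{A})| \ge d/4$, i.e. the edge isoperimetric profile of $T_d$ at $k$ is at least $d/4$. -/
/-!
Let `flips n` be the number of bit changes in the string `0 n₀ n₁ n₂ ⋯ 0 0 ⋯` of binary digits,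
i.e. twice the number of blocks of ones of `n`. Adding a Mersenne number `2 ^ m - 1` changes
`flips` by at most 4, so a positive signed sum of `L` Mersenne numbers has `flips ≤ 4 L - 2`.

Colour the complete tree by membership in `A` and let `b` be the number of bichromatic edges.
Every monochromatic component is a complete subtree minus the complete subtrees below its cut
edges, so the colour class of the root is the whole tree `2 ^ (d + 1) - 1` corrected by a signed
sum of `b` Mersenne numbers, and the other class is the complement. Hence
`flips |A| + flips |Aᶜ| ≤ 8 b`, while for `|A| = 1010⋯₂`, `|Aᶜ| = 0101⋯₂` the left side is
`2 (d + 1)`.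
-/

/-- The number `k ≤ 2^{d+1} - 1` whose binary expansion is `1010⋯` (alternating bits of
length `d+1`, starting with `1` at the most significant bit `2^d`). -/
def altNum (d : ℕ) : ℕ :=
  ∑ j ∈ Finset.range (d + 1), if (d - j) % 2 = 0 then 2 ^ j else 0

/-- The complete binary tree `T_d` of depth `d` in heap indexing: vertices are
`1, …, 2^{d+1} - 1` and the children of `x < 2^d` are `2x` and `2x+1`.  For a vertex set
`A`, `treeBoundary d A` is the number of edges of `T_d` with exactly one endpoint in `A`
(each edge being identified with its child endpoint `x ∈ [2, 2^{d+1})`, whose parent is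
`x / 2`). -/
def treeBoundary (d : ℕ) (A : Finset ℕ) : ℕ :=
  ((Finset.Ico 2 (2 ^ (d + 1))).filter fun x => ¬((x ∈ A) ↔ (x / 2 ∈ A))).card

/-- The number of bit changes in the string `p n₀ n₁ n₂ ⋯ 0 0 ⋯`. -/
def flipsFrom (p : Bool) (n : ℕ) : ℕ :=
  if n = 0 then p.toNat
  else (if n.bodd = p then 0 else 1) + flipsFrom n.bodd (n / 2)
decreasing_by omega

def flips (n : ℕ) : ℕ := flipsFrom false n

@[simp] lemma flipsFrom_zero (p : Bool) : flipsFrom p 0 = p.toNat := by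
  rw [flipsFrom, if_pos rfl]

lemma flipsFrom_two_mul (p : Bool) (n : ℕ) :
    flipsFrom p (2 * n) = p.toNat + flipsFrom false n := by
  rcases Nat.eq_zero_or_pos n with rfl | hn
  · simp
  · rw [flipsFrom, if_neg (by omega)]
    cases p <;> simp [Nat.bodd_mul]

lemma flipsFrom_two_mul_add_one (p : Bool) (n : ℕ) :
    flipsFrom p (2 * n + 1) = (!p).toNat + flipsFrom true n := by
  rw [flipsFrom, if_neg (by omega)]
  have h : (2 * n + 1) / 2 = n := by omega
  cases p <;> simp [Nat.bodd_mul, h]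

lemma flipsFrom_le_flipsFrom_add_one (p q : Bool) (n : ℕ) :
    flipsFrom p n ≤ flipsFrom q n + 1 := by
  obtain ⟨k, rfl | rfl⟩ := Nat.even_or_odd' n
  · rw [flipsFrom_two_mul, flipsFrom_two_mul]
    have := Bool.toNat_le p
    omega
  · rw [flipsFrom_two_mul_add_one, flipsFrom_two_mul_add_one]
    have := Bool.toNat_le (!p)
    omega

lemma flipsFrom_one (p : Bool) : flipsFrom p 1 = (!p).toNat + 1 := by
  simpa using flipsFrom_two_mul_add_one p 0

lemma flipsFrom_false_succ_bounds (n : ℕ) :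
    flipsFrom false (n + 1) ≤ flipsFrom true n + 1 ∧
      flipsFrom true n ≤ flipsFrom false (n + 1) + 1 := by
  induction n using Nat.evenOddRec with
  | h0 => simp [flipsFrom_one]
  | h_even k _ =>
    rw [flipsFrom_two_mul_add_one, flipsFrom_two_mul]
    have := flipsFrom_le_flipsFrom_add_one true false k
    have := flipsFrom_le_flipsFrom_add_one false true k
    simp only [Bool.not_false, Bool.toNat_true]
    omega
  | h_odd k ih =>
    rw [show 2 * k + 1 + 1 = 2 * (k + 1) by ring, flipsFrom_two_mul, flipsFrom_two_mul_add_one]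
    simpa using ih

lemma flipsFrom_succ_bounds (p : Bool) (n : ℕ) :
    flipsFrom p (n + 1) ≤ flipsFrom p n + 2 ∧ flipsFrom p n ≤ flipsFrom p (n + 1) + 2 := by
  have := Bool.toNat_le p
  have := Bool.toNat_le (!p)
  obtain ⟨k, rfl | rfl⟩ := Nat.even_or_odd' n
  · rw [flipsFrom_two_mul_add_one, flipsFrom_two_mul]
    have := flipsFrom_le_flipsFrom_add_one true false k
    have := flipsFrom_le_flipsFrom_add_one false true k
    omega
  · rw [show 2 * k + 1 + 1 = 2 * (k + 1) by ring, flipsFrom_two_mul, flipsFrom_two_mul_add_one]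
    have := flipsFrom_false_succ_bounds k
    omega

lemma flipsFrom_add_two_pow_bounds (m : ℕ) : ∀ (p : Bool) (n : ℕ),
    flipsFrom p (n + 2 ^ m) ≤ flipsFrom p n + 2 ∧ flipsFrom p n ≤ flipsFrom p (n + 2 ^ m) + 2 := by
  induction m with
  | zero => exact flipsFrom_succ_bounds
  | succ m ih =>
    intro p n
    obtain ⟨k, rfl | rfl⟩ := Nat.even_or_odd' n
    · rw [show 2 * k + 2 ^ (m + 1) = 2 * (k + 2 ^ m) by ring, flipsFrom_two_mul,
        flipsFrom_two_mul]
      have := ih false k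
      omega
    · rw [show 2 * k + 1 + 2 ^ (m + 1) = 2 * (k + 2 ^ m) + 1 by ring,
        flipsFrom_two_mul_add_one, flipsFrom_two_mul_add_one]
      have := ih true k
      omega

lemma flips_add_two_pow_sub_one_bounds (m n : ℕ) :
    flips (n + (2 ^ m - 1)) ≤ flips n + 4 ∧ flips n ≤ flips (n + (2 ^ m - 1)) + 4 := by
  have hsucc := flipsFrom_succ_bounds false (n + (2 ^ m - 1))
  have hpow := flipsFrom_add_two_pow_bounds m false n
  rw [show n + (2 ^ m - 1) + 1 = n + 2 ^ m by have := Nat.one_le_two_pow (n := m); omega]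
    at hsucc
  unfold flips
  omega

lemma flipsFrom_true_two_pow_sub_one (m : ℕ) : flipsFrom true (2 ^ m - 1) = 1 := by
  induction m with
  | zero => simp
  | succ m ih =>
    rw [show 2 ^ (m + 1) - 1 = 2 * (2 ^ m - 1) + 1 by
      have := Nat.one_le_two_pow (n := m); rw [pow_succ]; omega, flipsFrom_two_mul_add_one, ih]
    rfl

lemma flips_two_pow_sub_one_le (m : ℕ) : flips (2 ^ m - 1) ≤ 2 := by
  have := flipsFrom_le_flipsFrom_add_one false true (2 ^ m - 1)
  rw [flipsFrom_true_two_pow_sub_one] at this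
  exact this

lemma flips_two_mul (n : ℕ) : flips (2 * n) = flips n := by
  simp [flips, flipsFrom_two_mul]

lemma flips_four_mul_add_one (n : ℕ) : flips (4 * n + 1) = flips n + 2 := by
  rw [flips, show 4 * n + 1 = 2 * (2 * n) + 1 by ring, flipsFrom_two_mul_add_one,
    flipsFrom_two_mul]
  simp only [flips, Bool.not_false, Bool.toNat_true]
  omega

lemma altNum_zero : altNum 0 = 1 := by simp [altNum]

lemma altNum_succ (n : ℕ) : altNum (n + 1) = 2 * altNum n + n % 2 := by
  rw [altNum, Finset.sum_range_succ', altNum, Finset.mul_sum]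
  congr 1
  · refine Finset.sum_congr rfl fun j _ => ?_
    rw [show n + 1 - (j + 1) = n - j by omega]
    split_ifs <;> ring
  · rw [Nat.sub_zero, pow_zero]
    split_ifs <;> omega

lemma altNum_pos (n : ℕ) : 0 < altNum n := by
  induction n with
  | zero => simp [altNum_zero]
  | succ n ih => rw [altNum_succ]; omega

lemma altNum_add_altNum_succ (n : ℕ) : altNum n + altNum (n + 1) = 2 ^ (n + 2) - 1 := by
  induction n with
  | zero => simp [altNum_succ, altNum_zero]
  | succ n ih =>
    rw [altNum_succ (n + 1), show 2 ^ (n + 1 + 2) = 2 * 2 ^ (n + 2) by ring]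
    have := altNum_succ n
    have := altNum_pos n
    omega

lemma altNum_mod_two (n : ℕ) : altNum n % 2 = (n + 1) % 2 := by
  induction n with
  | zero => simp [altNum_zero]
  | succ n ih => rw [altNum_succ]; omega

lemma flips_altNum (n : ℕ) : flips (altNum n) = 2 * (n / 2 + 1) := by
  induction n with
  | zero => simp [altNum_zero, flips, flipsFrom_one]
  | succ n ih =>
    rw [altNum_succ]
    rcases Nat.mod_two_eq_zero_or_one n with h | h
    · rw [h, Nat.add_zero, flips_two_mul, ih]
      omega
    · obtain ⟨j, hj⟩ : ∃ j, altNum n = 2 * j := ⟨altNum n / 2, by have := altNum_mod_two n; omega⟩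
      rw [hj, flips_two_mul] at ih
      rw [hj, h, show 2 * (2 * j) + 1 = 4 * j + 1 by ring, flips_four_mul_add_one, ih]
      omega

def mersenneSum (l : List ℕ) : ℕ := (l.map fun m => 2 ^ m - 1).sum

@[simp] lemma mersenneSum_nil : mersenneSum [] = 0 := rfl

@[simp] lemma mersenneSum_cons (m : ℕ) (l : List ℕ) :
    mersenneSum (m :: l) = (2 ^ m - 1) + mersenneSum l := by
  simp [mersenneSum]

lemma flips_add_mersenneSum_bounds (Q : List ℕ) (n : ℕ) :
    flips (n + mersenneSum Q) ≤ flips n + 4 * Q.length ∧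
      flips n ≤ flips (n + mersenneSum Q) + 4 * Q.length := by
  induction Q generalizing n with
  | nil => simp
  | cons q Q ih =>
    have hq := flips_add_two_pow_sub_one_bounds q n
    have hQ := ih (n + (2 ^ q - 1))
    rw [mersenneSum_cons, ← add_assoc, List.length_cons]
    omega

lemma flips_mersenneSum_cons_le (m : ℕ) (P : List ℕ) :
    flips (mersenneSum (m :: P)) + 2 ≤ 4 * (m :: P).length := by
  have := (flips_add_mersenneSum_bounds P (2 ^ m - 1)).1
  have := flips_two_pow_sub_one_le m
  rw [mersenneSum_cons, List.length_cons]
  omega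

/-- `n - M` is a signed sum of at most `L` numbers of the form `2 ^ m - 1`. -/
def MersenneRep (n M L : ℕ) : Prop :=
  ∃ P Q : List ℕ, n + mersenneSum Q = M + mersenneSum P ∧ P.length + Q.length ≤ L

namespace MersenneRep

variable {n n' M M' L L' : ℕ}

lemma self (n : ℕ) : MersenneRep n n 0 := ⟨[], [], by simp, by simp⟩

lemma mono (h : MersenneRep n M L) (hL : L ≤ L') : MersenneRep n M L' :=
  let ⟨P, Q, hsum, hlen⟩ := h
  ⟨P, Q, hsum, hlen.trans hL⟩

lemma add (h : MersenneRep n M L) (h' : MersenneRep n' M' L') :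
    MersenneRep (n + n') (M + M') (L + L') := by
  obtain ⟨P, Q, hsum, hlen⟩ := h
  obtain ⟨P', Q', hsum', hlen'⟩ := h'
  refine ⟨P ++ P', Q ++ Q', ?_, ?_⟩
  · simp only [mersenneSum, List.map_append, List.sum_append] at *
    omega
  · simp only [List.length_append]
    omega

lemma add_top (h : MersenneRep n M L) (m : ℕ) : MersenneRep n (M + (2 ^ m - 1)) (L + 1) := by
  obtain ⟨P, Q, hsum, hlen⟩ := h
  refine ⟨P, m :: Q, ?_, ?_⟩
  · rw [mersenneSum_cons]
    omega
  · rw [List.length_cons]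
    omega

lemma of_add_top {m : ℕ} (h : MersenneRep n (M + (2 ^ m - 1)) L) : MersenneRep n M (L + 1) := by
  obtain ⟨P, Q, hsum, hlen⟩ := h
  refine ⟨m :: P, Q, ?_, ?_⟩
  · rw [mersenneSum_cons]
    omega
  · rw [List.length_cons]
    omega

lemma recolour {m : ℕ} (a b c : Bool) (h : MersenneRep n (if a = c then 2 ^ m - 1 else 0) L) :
    MersenneRep n (if b = c then 2 ^ m - 1 else 0) (L + if a = b then 0 else 1) := by
  by_cases hab : a = b
  · subst hab
    simpa using h
  by_cases hac : a = c
  · have hbc : b ≠ c := fun hbc => hab (hac.trans hbc.symm)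
    rw [if_pos hac] at h
    rw [if_neg hbc, if_neg hab]
    exact of_add_top (M := 0) (by simpa using h)
  · have hbc : b = c := by cases a <;> cases b <;> cases c <;> simp_all
    rw [if_neg hac] at h
    rw [if_pos hbc, if_neg hab]
    simpa using h.add_top m

lemma complement (h : MersenneRep n M L) (hn : n + n' = M) : MersenneRep n' 0 L := by
  obtain ⟨P, Q, hsum, hlen⟩ := h
  exact ⟨Q, P, by omega, by omega⟩

lemma flips_add_two_le (h : MersenneRep n 0 L) (hn : 0 < n) : flips n + 2 ≤ 4 * L := by
  obtain ⟨P, Q, hsum, hlen⟩ := h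
  cases P with
  | nil => rw [mersenneSum_nil] at hsum; omega
  | cons m P =>
    have hQ := (flips_add_mersenneSum_bounds Q n).2
    rw [hsum, zero_add] at hQ
    have := flips_mersenneSum_cons_le m P
    omega

lemma flips_add_flips_le {m : ℕ} (h : MersenneRep n (2 ^ m - 1) L) (hnn' : n + n' = 2 ^ m - 1)
    (hn : 0 < n) (hn' : 0 < n') : flips n + flips n' ≤ 8 * L := by
  have := (of_add_top (M := 0) (by simpa using h)).flips_add_two_le hn
  have := (h.complement hnn').flips_add_two_le hn'
  omega

end MersenneRep

open Finset

/-- Level `j` of the subtree of height `h` rooted at `v` (in heap indexing) is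
`[v * 2 ^ j, (v + 1) * 2 ^ j)`. -/
def subtreeSum (f : ℕ → ℕ) (v h : ℕ) : ℕ :=
  ∑ j ∈ range (h + 1), ∑ r ∈ range (2 ^ j), f (v * 2 ^ j + r)

section subtreeSum

variable (f : ℕ → ℕ)

@[simp] lemma subtreeSum_zero (v : ℕ) : subtreeSum f v 0 = f v := by
  simp [subtreeSum]

lemma subtreeSum_succ (v h : ℕ) :
    subtreeSum f v (h + 1) = f v + subtreeSum f (2 * v) h + subtreeSum f (2 * v + 1) h := by
  have level (j : ℕ) : ∑ r ∈ range (2 ^ (j + 1)), f (v * 2 ^ (j + 1) + r) =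
      ∑ r ∈ range (2 ^ j), f (2 * v * 2 ^ j + r) +
        ∑ r ∈ range (2 ^ j), f ((2 * v + 1) * 2 ^ j + r) := by
    rw [pow_succ, mul_two, sum_range_add]
    congr 1 <;> refine sum_congr rfl fun r _ => ?_ <;> ring_nf
  rw [subtreeSum, sum_range_succ', sum_congr rfl fun j _ => level j, sum_add_distrib]
  simp only [subtreeSum, pow_zero, range_one, sum_singleton, mul_one, add_zero]
  ring

lemma subtreeSum_one (h : ℕ) : subtreeSum f 1 h = ∑ x ∈ Ico 1 (2 ^ (h + 1)), f x := by
  induction h with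
  | zero => simp
  | succ h ih =>
    rw [subtreeSum, sum_range_succ, ← subtreeSum, ih, ← sum_Ico_consecutive f
      (Nat.one_le_two_pow (n := h + 1)) (Nat.pow_le_pow_right two_pos (Nat.le_succ (h + 1))),
      sum_Ico_eq_sum_range f (2 ^ (h + 1)), pow_succ 2 (h + 1), mul_two, Nat.add_sub_cancel]
    simp

lemma le_subtreeSum (v h : ℕ) : f v ≤ subtreeSum f v h := by
  cases h with
  | zero => simp
  | succ h => rw [subtreeSum_succ]; omega

lemma subtreeSum_add (g : ℕ → ℕ) (v h : ℕ) :
    subtreeSum (fun x => f x + g x) v h = subtreeSum f v h + subtreeSum g v h := by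
  simp only [subtreeSum, sum_add_distrib]

end subtreeSum

lemma subtreeSum_const_one (v h : ℕ) : subtreeSum (fun _ => 1) v h = 2 ^ (h + 1) - 1 := by
  induction h generalizing v with
  | zero => simp
  | succ h ih =>
    rw [subtreeSum_succ, ih, ih, pow_succ 2 (h + 1)]
    have := Nat.one_le_two_pow (n := h + 1)
    omega

section Colouring

variable (π : ℕ → Bool)

def colourCount (c : Bool) (v h : ℕ) : ℕ := subtreeSum (fun x => if π x = c then 1 else 0) v h

def cutAt (x : ℕ) : ℕ := if π x = π (x / 2) then 0 else 1

lemma colourCount_add_colourCount_not (c : Bool) (v h : ℕ) :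
    colourCount π c v h + colourCount π (!c) v h = 2 ^ (h + 1) - 1 := by
  rw [colourCount, colourCount, ← subtreeSum_add, ← subtreeSum_const_one v h]
  congr 1
  funext x
  cases c <;> cases π x <;> rfl

/-- Each monochromatic component is a complete subtree minus the complete subtrees hanging below
its cut edges. -/
theorem mersenneRep_colourCount (c : Bool) (h : ℕ) : ∀ v,
    MersenneRep (colourCount π c v h) (if π v = c then 2 ^ (h + 1) - 1 else 0)
      (subtreeSum (cutAt π) v h - cutAt π v) := by
  induction h with
  | zero =>
    intro v
    simpa [colourCount] using MersenneRep.self (if π v = c then 1 else 0)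
  | succ h ih =>
    intro v
    have child (u : ℕ) (hu : u / 2 = v) : MersenneRep (colourCount π c u h)
        (if π v = c then 2 ^ (h + 1) - 1 else 0) (subtreeSum (cutAt π) u h) := by
      refine ((ih u).recolour (π u) (π v) c).mono ?_
      have hcut : cutAt π u = if π u = π v then 0 else 1 := by rw [cutAt, hu]
      have := le_subtreeSum (cutAt π) u h
      omega
    have hsplit := ((MersenneRep.self (if π v = c then 1 else 0)).add
      (child (2 * v) (by omega))).add (child (2 * v + 1) (by omega))
    rw [colourCount, subtreeSum_succ, ← colourCount, ← colourCount, subtreeSum_succ,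
      pow_succ 2 (h + 1)]
    convert hsplit using 1
    · have := Nat.one_le_two_pow (n := h + 1)
      split_ifs <;> omega
    · omega

end Colouring

lemma flips_colourCount_add_le (π : ℕ → Bool) (d : ℕ) (hpos : ∀ c, 0 < colourCount π c 1 d) :
    flips (colourCount π true 1 d) + flips (colourCount π false 1 d) ≤
      8 * (subtreeSum (cutAt π) 1 d - cutAt π 1) := by
  have hrep := mersenneRep_colourCount π (π 1) d 1
  rw [if_pos rfl] at hrep
  have := hrep.flips_add_flips_le (colourCount_add_colourCount_not π (π 1) 1 d) (hpos _) (hpos _)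
  generalize π 1 = c at this
  cases c
  · simpa [add_comm] using this
  · simpa using this

lemma colourCount_decide_mem {d : ℕ} {A : Finset ℕ} (hA : A ⊆ Ico 1 (2 ^ (d + 1))) :
    colourCount (fun x => decide (x ∈ A)) true 1 d = A.card := by
  rw [colourCount, subtreeSum_one, ← card_filter]
  simp [filter_mem_eq_inter, inter_eq_right.mpr hA]

lemma treeBoundary_eq_subtreeSum_cutAt (d : ℕ) (A : Finset ℕ) :
    treeBoundary d A = subtreeSum (cutAt fun x => decide (x ∈ A)) 1 d -
      cutAt (fun x => decide (x ∈ A)) 1 := by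
  rw [subtreeSum_one, sum_eq_sum_Ico_succ_bot (Nat.one_lt_two_pow (by omega)),
    Nat.add_sub_cancel_left, treeBoundary, card_filter]
  refine sum_congr rfl fun x _ => ?_
  simp [cutAt]

/-- every subset `A` of the vertices of `T_d` of size `k = altNum d`
(binary expansion `1010⋯`) has edge boundary at least `d/4`. -/
theorem tree_eip (d : ℕ) (A : Finset ℕ) (hA : A ⊆ Finset.Ico 1 (2 ^ (d + 1)))
    (hcard : A.card = altNum d) :
    (d : ℝ) / 4 ≤ (treeBoundary d A : ℝ) := by
  obtain _ | e := d
  · simp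
  set π : ℕ → Bool := fun x => decide (x ∈ A)
  have htrue : colourCount π true 1 (e + 1) = altNum (e + 1) := by
    rw [colourCount_decide_mem hA, hcard]
  have hfalse : colourCount π false 1 (e + 1) = altNum e := by
    have hsum := colourCount_add_colourCount_not π true 1 (e + 1)
    rw [Bool.not_true, htrue, ← altNum_add_altNum_succ e] at hsum
    omega
  have hflips := flips_colourCount_add_le π (e + 1) fun c => by
    cases c
    · rw [hfalse]; exact altNum_pos e
    · rw [htrue]; exact altNum_pos (e + 1)
  rw [htrue, hfalse, flips_altNum, flips_altNum, ← treeBoundary_eq_subtreeSum_cutAt] at hflips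
  rw [div_le_iff₀ four_pos]
  exact_mod_cast (by omega : e + 1 ≤ treeBoundary (e + 1) A * 4)
end

section
/- Let $f(y_1,y_2) = \sum_{i=1}^w u_i(y_1) v_i(y_2)$ be a nonzero bivariate polynomial of total degree $d$ over a field $\mathbb{F}$ with characteristic $0$ or characteristic greater than $d$. Then the univariate polynomial $f(t^w, t^{w-1} + t^w) \in \mathbb{F}[t]$ is nonzero. -/
/-
Let `D = totalDegree f` and `φ(Y) = f_D(1, Y)`, where `f_D` is the degree-`D` component of `f`.
The substitution sends `y₁^a y₂^b` to `t^(w a + (w-1) b) (1 + t)^b`, a polynomial of degree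
`w (a + b)` whose coefficient of `t^(w (a + b) - i)` is `b.choose i`. Hence for `i < w` the
coefficient of `t^(w D - i)` in `f(t^w, t^(w-1) + t^w)` only sees `f_D`, and it equals the
coefficient of `t^i` in `φ(1 + t)`: if the substitution vanishes, `(Y - 1)^w` divides `φ`.

But `φ` has at most `w` monomials: for `b` in its support the row `∑ i, u_i[D - b] • v_i`, which
lies in the span of the `v_i`, has degree exactly `b` because `f` has no monomial of degree above
`D`, and polynomials of distinct degrees are linearly independent.

Finally, a nonzero polynomial with `s` monomials whose exponents stay distinct in the field is not
divisible by `(Y - a)^s` when `a ≠ 0`: the operator `Y d/dY - e` kills the monomial `Y^e`, rescales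
the other monomials by nonzero scalars and keeps divisibility by `(Y - a)^(s-1)`. The exponents of
`φ` are at most `d`, so the characteristic assumption keeps them distinct.
-/

open Finset

namespace Polynomial

theorem coeff_X_pow_mul_X_add_one_pow_of_add_le {R : Type*} [Semiring R] {w a b D i : ℕ}
    (hab : a + b ≤ D) (hi : i < w) (hiD : i ≤ D) :
    (X ^ (w * a + (w - 1) * b) * (X + 1 : R[X]) ^ b).coeff (w * D - i) =
      if a + b = D then (b.choose i : R) else 0 := by
  obtain ⟨k, rfl⟩ : ∃ k, w = k + 1 := ⟨w - 1, by omega⟩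
  obtain ⟨c, rfl⟩ := Nat.exists_eq_add_of_le hab
  have hexp : (k + 1) * (a + b + c) = k * a + k * b + k * c + a + b + c := by ring
  have hexp' : (k + 1) * a = k * a + a := by ring
  have hkc : 0 < c → k ≤ k * c := Nat.le_mul_of_pos_right k
  rw [Nat.add_sub_cancel, coeff_X_pow_mul', coeff_X_add_one_pow]
  split_ifs with hle hc hc
  · obtain rfl : c = 0 := by omega
    rw [← Nat.choose_symm (n := b) (k := i) (by omega)]
    congr 2
    omega
  · rw [Nat.choose_eq_zero_of_lt (by omega), Nat.cast_zero]
  · obtain rfl : c = 0 := by omega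
    rw [Nat.choose_eq_zero_of_lt (by omega), Nat.cast_zero]
  · rfl

variable {R : Type*} [CommRing R]

theorem X_sub_C_pow_dvd_iff_coeff_taylor {r : R} {f : R[X]} {n : ℕ} :
    (X - C r) ^ n ∣ f ↔ ∀ i < n, (taylor r f).coeff i = 0 := by
  rw [← X_pow_dvd_iff, ← map_dvd_iff (taylorEquiv r)]
  simp [taylorEquiv]

section IsDomain

variable [IsDomain R]

theorem eq_zero_of_X_sub_C_pow_card_support_dvd {a : R} (ha : a ≠ 0) {g : R[X]}
    (hinj : Set.InjOn (Nat.cast : ℕ → R) g.support) (hdvd : (X - C a) ^ #g.support ∣ g) :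
    g = 0 := by
  induction hn : #g.support generalizing g with
  | zero => exact support_eq_empty.mp (card_eq_zero.mp hn)
  | succ n ih =>
    rw [hn] at hdvd
    obtain ⟨e, he⟩ : g.support.Nonempty := card_pos.mp (by omega)
    set q := X * derivative g - C (e : R) * g
    have hcoeff : ∀ k, q.coeff k = ((k : R) - e) * g.coeff k := by
      rintro (_ | k)
      · simp [q]
      · simp only [q, coeff_sub, coeff_X_mul, coeff_derivative, coeff_C_mul]
        push_cast
        ring
    have hsupp : q.support = g.support.erase e := by
      ext k
      simp only [mem_support_iff, hcoeff, mem_erase, ne_eq, mul_eq_zero, sub_eq_zero, not_or,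
        and_congr_left_iff]
      exact fun hk => (hinj.eq_iff (mem_support_iff.mpr hk) he).not
    have hq : q = 0 := by
      have hder : (X - C a) ^ n ∣ derivative g := by
        simpa using pow_sub_one_dvd_derivative_of_pow_dvd hdvd
      refine ih (hinj.mono ?_) ?_ (by rw [hsupp, card_erase_of_mem he, hn]; rfl)
      · simpa only [hsupp, coe_erase] using Set.sdiff_subset
      · rw [hsupp, card_erase_of_mem he, hn, Nat.add_sub_cancel]
        exact dvd_sub (dvd_mul_of_dvd_right hder _)
          (dvd_mul_of_dvd_right ((pow_dvd_pow _ n.le_succ).trans hdvd) _)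
    obtain ⟨k, c, hc, rfl⟩ := card_support_eq_one.mp <| by
      rw [← card_erase_add_one he, ← hsupp, hq, support_zero, card_empty]
    have hroot := dvd_iff_isRoot.mp ((dvd_pow_self _ n.succ_ne_zero).trans hdvd)
    simp [hc, ha] at hroot

theorem linearIndependent_of_injective_natDegree {ι : Type*} {p : ι → R[X]} (h0 : ∀ i, p i ≠ 0)
    (hinj : Function.Injective (natDegree ∘ p)) : LinearIndependent R p := by
  have hdeg : ∀ {i} {c : R}, c ≠ 0 → (c • p i).degree = (p i).natDegree := fun hc => by
    rw [smul_eq_C_mul, degree_C_mul hc, degree_eq_natDegree (h0 _)]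
  rw [linearIndependent_iff']
  intro s g hsum i hi
  by_contra hgi
  have hsup := degree_sum_eq_of_disjoint (fun j => g j • p j) s <| by
    rintro j ⟨-, hj⟩ k ⟨-, hk⟩ hjk
    simpa [Function.onFun, hdeg (left_ne_zero_of_smul hj), hdeg (left_ne_zero_of_smul hk)]
      using hinj.ne hjk
  rw [hsum, degree_zero, eq_comm, Finset.sup_eq_bot_iff] at hsup
  simpa [hdeg hgi] using hsup i hi

end IsDomain

end Polynomial

theorem injOn_natCast_Iic_of_ringChar {R : Type*} [NonAssocRing R] {d : ℕ}
    (hchar : ringChar R = 0 ∨ d < ringChar R) :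
    Set.InjOn (Nat.cast : ℕ → R) (Set.Iic d) := by
  intro a ha b hb hab
  rw [CharP.natCast_eq_natCast R (ringChar R)] at hab
  rcases hchar with h | h
  · rwa [h, Nat.modEq_zero_iff] at hab
  · exact hab.eq_of_lt_of_lt (by simp at ha; omega) (by simp at hb; omega)

theorem Finsupp.eq_single_zero_add_single_one_iff {m : Fin 2 →₀ ℕ} {a b : ℕ} :
    m = single 0 a + single 1 b ↔ m 0 = a ∧ m 1 = b := by
  simp [Finsupp.ext_iff, Fin.forall_fin_two]

theorem Finsupp.degree_fin_two (m : Fin 2 →₀ ℕ) : m.degree = m 0 + m 1 := by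
  rw [Finsupp.degree_eq_sum, Fin.sum_univ_two]

namespace MvPolynomial

variable {R : Type*} [CommSemiring R]

theorem coeff_aeval_X_zero_mul_aeval_X_one (p q : Polynomial R) (a b : ℕ) :
    coeff (Finsupp.single 0 a + Finsupp.single 1 b)
      (Polynomial.aeval (X 0) p * Polynomial.aeval (X 1) q : MvPolynomial (Fin 2) R) =
      p.coeff a * q.coeff b := by
  induction p using Polynomial.induction_on' with
  | add p p' hp hp' => rw [map_add, add_mul, coeff_add, hp, hp', Polynomial.coeff_add, add_mul]
  | monomial a' c =>
    induction q using Polynomial.induction_on' with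
    | add q q' hq hq' => rw [map_add, mul_add, coeff_add, hq, hq', Polynomial.coeff_add, mul_add]
    | monomial b' c' =>
      simp only [Polynomial.aeval_monomial, algebraMap_eq, X_pow_eq_monomial, C_mul_monomial,
        monomial_mul, coeff_monomial, Polynomial.coeff_monomial, mul_one,
        Finsupp.eq_single_zero_add_single_one_iff]
      by_cases ha : a' = a <;> by_cases hb : b' = b <;> simp [ha, hb]

theorem coeff_single_add_single_eq_zero_of_totalDegree_lt {f : MvPolynomial (Fin 2) R}
    {a b : ℕ} (h : f.totalDegree < a + b) :
    f.coeff (Finsupp.single 0 a + Finsupp.single 1 b) = 0 :=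
  coeff_eq_zero_of_totalDegree_lt <| by
    rw [← Finsupp.degree_apply, Finsupp.degree_fin_two]
    simpa using h

noncomputable def dehomogenizedComponent (D : ℕ) : MvPolynomial (Fin 2) R →ₗ[R] Polynomial R :=
  (aeval ![1, Polynomial.X]).toLinearMap ∘ₗ homogeneousComponent D

theorem dehomogenizedComponent_monomial (D : ℕ) (m : Fin 2 →₀ ℕ) (c : R) :
    dehomogenizedComponent D (monomial m c) =
      if m 0 + m 1 = D then Polynomial.monomial (m 1) c else 0 := by
  rw [dehomogenizedComponent, LinearMap.comp_apply, AlgHom.toLinearMap_apply,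
    homogeneousComponent_of_mem (isHomogeneous_monomial c rfl),
    Finsupp.degree_fin_two]
  by_cases h : m 0 + m 1 = D
  · rw [if_pos h.symm, if_pos h, aeval_monomial, Finsupp.prod_fintype _ _ (by simp),
      Fin.prod_univ_two]
    simp [Polynomial.C_mul_X_pow_eq_monomial]
  · rw [if_neg (Ne.symm h), if_neg h, map_zero]

theorem coeff_dehomogenizedComponent (D b : ℕ) (f : MvPolynomial (Fin 2) R) :
    (dehomogenizedComponent D f).coeff b =
      if b ≤ D then f.coeff (Finsupp.single 0 (D - b) + Finsupp.single 1 b) else 0 := by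
  induction f using MvPolynomial.induction_on' with
  | add f g hf hg =>
    simp only [map_add, Polynomial.coeff_add, coeff_add] at hf hg ⊢
    rw [hf, hg]
    split_ifs <;> simp
  | monomial m c =>
    simp only [dehomogenizedComponent_monomial, coeff_monomial,
      Finsupp.eq_single_zero_add_single_one_iff, apply_ite (Polynomial.coeff · b),
      Polynomial.coeff_monomial, Polynomial.coeff_zero]
    split_ifs <;> first | rfl | (exfalso; omega)

theorem dehomogenizedComponent_totalDegree_ne_zero {f : MvPolynomial (Fin 2) R} (hf : f ≠ 0) :
    dehomogenizedComponent f.totalDegree f ≠ 0 := by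
  obtain ⟨m, hm, hdeg⟩ := Finset.exists_mem_eq_sup f.support (support_nonempty.mpr hf)
    fun m => m.sum fun _ e => e
  replace hdeg : m 0 + m 1 = f.totalDegree := by
    rw [← Finsupp.degree_fin_two]
    exact hdeg.symm
  have hm' : m = Finsupp.single 0 (f.totalDegree - m 1) + Finsupp.single 1 (m 1) :=
    Finsupp.eq_single_zero_add_single_one_iff.mpr ⟨by omega, rfl⟩
  intro h
  have := coeff_dehomogenizedComponent f.totalDegree (m 1) f
  rw [h, Polynomial.coeff_zero, if_pos (by omega), ← hm'] at this
  exact mem_support_iff.mp hm this.symm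

theorem natDegree_dehomogenizedComponent_le (D : ℕ) (f : MvPolynomial (Fin 2) R) :
    (dehomogenizedComponent D f).natDegree ≤ D :=
  Polynomial.natDegree_le_iff_coeff_eq_zero.mpr fun b hb => by
    rw [coeff_dehomogenizedComponent, if_neg (by omega)]

theorem card_support_dehomogenizedComponent_le {K ι : Type*} [Field K] [Fintype ι]
    {u v : ι → Polynomial K} {f : MvPolynomial (Fin 2) K}
    (hf : f = ∑ i, Polynomial.aeval (X 0) (u i) * Polynomial.aeval (X 1) (v i)) {D : ℕ}
    (hD : f.totalDegree ≤ D) : #(dehomogenizedComponent D f).support ≤ Fintype.card ι := by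
  set S := (dehomogenizedComponent D f).support
  set row : ℕ → Polynomial K := fun a => ∑ i, (u i).coeff a • v i
  have hrow : ∀ a b, (row a).coeff b = f.coeff (Finsupp.single 0 a + Finsupp.single 1 b) := by
    simp [row, hf, coeff_sum, coeff_aeval_X_zero_mul_aeval_X_one]
  have hdeg : ∀ b ∈ S, (row (D - b)).natDegree = b ∧ row (D - b) ≠ 0 := by
    intro b hb
    have hbD : b ≤ D :=
      (Polynomial.le_natDegree_of_mem_supp b hb).trans (natDegree_dehomogenizedComponent_le D f)
    rw [Polynomial.mem_support_iff, coeff_dehomogenizedComponent, if_pos hbD, ← hrow] at hb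
    refine ⟨Polynomial.natDegree_eq_of_le_of_coeff_ne_zero ?_ hb, fun h => hb (by simp [h])⟩
    refine Polynomial.natDegree_le_iff_coeff_eq_zero.mpr fun b' hb' => ?_
    rw [hrow]
    exact coeff_single_add_single_eq_zero_of_totalDegree_lt (by omega)
  have hli : LinearIndependent K fun b : S => row (D - b) :=
    Polynomial.linearIndependent_of_injective_natDegree (fun b => (hdeg b b.2).2)
      fun b b' h => Subtype.ext <| by simpa [hdeg b b.2, hdeg b' b'.2] using h
  calc #S = Fintype.card S := (Fintype.card_coe S).symm
    _ = (Set.range fun b : S => row (D - b)).finrank K := (finrank_span_eq_card hli).symm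
    _ ≤ (Set.range v).finrank K := by
      have := FiniteDimensional.span_of_finite K (Set.finite_range v)
      refine Submodule.finrank_mono (Submodule.span_le.mpr ?_)
      rintro _ ⟨b, rfl⟩
      exact Submodule.sum_mem _ fun i _ => Submodule.smul_mem _ _ (Submodule.subset_span ⟨i, rfl⟩)
    _ ≤ Fintype.card ι := finrank_range_le_card v

theorem coeff_aeval_eq_coeff_taylor_dehomogenizedComponent {w D i : ℕ}
    {f : MvPolynomial (Fin 2) R} (hf : f.totalDegree ≤ D) (hi : i < w) (hiD : i ≤ D) :
    (aeval ![Polynomial.X ^ w, Polynomial.X ^ (w - 1) + Polynomial.X ^ w] f).coeff (w * D - i) =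
      (Polynomial.taylor 1 (dehomogenizedComponent D f)).coeff i := by
  have hX : (Polynomial.X ^ (w - 1) + Polynomial.X ^ w : Polynomial R) =
      Polynomial.X ^ (w - 1) * (Polynomial.X + 1) := by
    rw [mul_add, mul_one, ← pow_succ, Nat.sub_add_cancel (by omega), add_comm]
  rw [f.as_sum, map_sum, map_sum, map_sum, Polynomial.finsetSum_coeff, Polynomial.finsetSum_coeff]
  refine Finset.sum_congr rfl fun m hm => ?_
  have hm : m 0 + m 1 ≤ D := by
    rw [← Finsupp.degree_fin_two]
    exact (le_totalDegree hm).trans hf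
  rw [aeval_monomial, Finsupp.prod_fintype _ _ (by simp), Fin.prod_univ_two,
    dehomogenizedComponent_monomial]
  simp only [Matrix.cons_val_zero, Matrix.cons_val_one, hX, mul_pow, ← pow_mul]
  rw [Polynomial.algebraMap_eq, ← mul_assoc (Polynomial.X ^ _), ← pow_add, Polynomial.coeff_C_mul,
    Polynomial.coeff_X_pow_mul_X_add_one_pow_of_add_le hm hi hiD]
  split_ifs <;> simp [Polynomial.taylor_monomial, Polynomial.coeff_X_add_one_pow]

end MvPolynomial

open MvPolynomial

theorem bivariate_gks_general {F : Type*} [Field F] (w d : ℕ)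
    (u v : Fin w → Polynomial F) (f : MvPolynomial (Fin 2) F)
    (hf : f = ∑ i : Fin w,
      Polynomial.aeval (X 0 : MvPolynomial (Fin 2) F) (u i) *
        Polynomial.aeval (X 1 : MvPolynomial (Fin 2) F) (v i))
    (hdeg : f.totalDegree ≤ d) (hne : f ≠ 0)
    (hchar : ringChar F = 0 ∨ d < ringChar F) :
    MvPolynomial.aeval
      ![(Polynomial.X : Polynomial F) ^ w,
        (Polynomial.X : Polynomial F) ^ (w - 1) + Polynomial.X ^ w] f ≠ 0 := by
  intro hP
  set φ := dehomogenizedComponent f.totalDegree f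
  have hφD : φ.natDegree ≤ f.totalDegree := natDegree_dehomogenizedComponent_le _ _
  have hcard : #φ.support ≤ w := by
    simpa using card_support_dehomogenizedComponent_le hf le_rfl
  have hdvd : (Polynomial.X - Polynomial.C 1) ^ w ∣ φ := by
    refine Polynomial.X_sub_C_pow_dvd_iff_coeff_taylor.mpr fun i hi => ?_
    rcases le_or_gt i f.totalDegree with hiD | hiD
    · rw [← coeff_aeval_eq_coeff_taylor_dehomogenizedComponent le_rfl hi hiD, hP,
        Polynomial.coeff_zero]
    · rw [Polynomial.coeff_eq_zero_of_natDegree_lt (by rw [Polynomial.natDegree_taylor]; omega)]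
  have hinj : Set.InjOn (Nat.cast : ℕ → F) φ.support :=
    (injOn_natCast_Iic_of_ringChar hchar).mono fun b hb =>
      (Polynomial.le_natDegree_of_mem_supp b hb).trans (hφD.trans hdeg)
  exact dehomogenizedComponent_totalDegree_ne_zero hne <|
    Polynomial.eq_zero_of_X_sub_C_pow_card_support_dvd one_ne_zero hinj
      ((pow_dvd_pow _ hcard).trans hdvd)

/-- if `f(y₁,y₂) = ∑_{i=1}^w u_i(y₁) v_i(y₂)` is a nonzero bivariate
polynomial of total degree at most `d` over a field of characteristic `0` or `> d`,
then `f(t^w, t^{w-1} + t^w) ≠ 0`. -/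
theorem bivariate_gks {F : Type*} [Field F] (w d : ℕ) (hw : 1 ≤ w)
    (u v : Fin w → Polynomial F) (f : MvPolynomial (Fin 2) F)
    (hf : f = ∑ i : Fin w,
      Polynomial.aeval (X 0 : MvPolynomial (Fin 2) F) (u i) *
        Polynomial.aeval (X 1 : MvPolynomial (Fin 2) F) (v i))
    (hdeg : f.totalDegree ≤ d) (hne : f ≠ 0)
    (hchar : ringChar F = 0 ∨ d < ringChar F) :
    MvPolynomial.aeval
      ![(Polynomial.X : Polynomial F) ^ w,
        (Polynomial.X : Polynomial F) ^ (w - 1) + Polynomial.X ^ w] f ≠ 0 :=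
  bivariate_gks_general w d u v f hf hdeg hne hchar
end

section
/- Let $V$ be a vector space of polynomials in $\mathbb{F}[y_1,\ldots,y_n]$ of degree at most $d$, and suppose $\mathrm{wt}: \{y_1,\ldots,y_n\} \to [M]^k$ is a basis isolating weight assignment for $V$. Then for any $f \in V$: $f \ne 0$ if and only if the $k$-variate polynomial $f(\mathbf{t}^{\mathrm{wt}(y_1)}, \ldots, \mathbf{t}^{\mathrm{wt}(y_n)}) \in \mathbb{F}[t_1,\ldots,t_k]$ is nonzero, where $\mathbf{t}^{(\alpha_1,\ldots,\alpha_k)}$ denotes $t_1^{\alpha_1}\cdots t_k^{\alpha_k}$. -/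
/-- The substitution `y_x ↦ t^{wt(y_x)} = t_1^{wt(y_x)_1} ⋯ t_k^{wt(y_x)_k}` applied to a
multilinear polynomial `f ∈ 𝔽[y_1,…,y_n]` (given by its coefficient function on
multilinear monomials): the result is the `k`-variate polynomial
`∑_S f_S · t^{∑_{x ∈ S} wt(y_x)}`. -/
noncomputable def substWt {F : Type*} [Field F] {n k : ℕ} (wt : Fin n → Fin k → ℕ)
    (f : Finset (Fin n) → F) : MvPolynomial (Fin k) F :=
  ∑ S : Finset (Fin n),
    MvPolynomial.monomial (Finsupp.equivFunOnFinite.symm (∑ x ∈ S, wt x)) (f S)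

/-!
Take a basis monomial `b₀` with `f b₀ ≠ 0` of lex-minimal weight. No other monomial of that
weight survives in `f`: another basis monomial has a different weight, and a non-basis column
is a combination of basis columns of strictly smaller weight, on which `f` vanishes by
minimality. Hence the coefficient of `t^{wt b₀}` in the substituted polynomial is `f b₀ ≠ 0`.
-/

open MvPolynomial

theorem apply_eq_zero_of_col_mem_span {F Mon : Type*} [Field F] {V : Submodule F (Mon → F)}
    {f : Mon → F} (hf : f ∈ V) {S : Set Mon} {m : Mon}
    (hm : col V m ∈ Submodule.span F (col V '' S)) (hS : ∀ s ∈ S, f s = 0) : f m = 0 := by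
  have hle : Submodule.span F (col V '' S) ≤ LinearMap.ker (LinearMap.applyₗ (⟨f, hf⟩ : V)) := by
    rw [Submodule.span_le]
    rintro _ ⟨s, hs, rfl⟩
    exact hS s hs
  exact hle hm

theorem IsBIWA.exists_apply_ne_zero_forall_weight_eq {F Mon : Type*} [Field F] {k : ℕ}
    {wt : Mon → Fin k → ℕ} {V : Submodule F (Mon → F)} (hbiwa : IsBIWA wt V)
    {f : Mon → F} (hf : f ∈ V) (hne : f ≠ 0) :
    ∃ m₀, f m₀ ≠ 0 ∧ ∀ m, wt m = wt m₀ → f m ≠ 0 → m = m₀ := by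
  obtain ⟨B, hdist, -, hspan⟩ := hbiwa
  have vanish_off_basis : ∀ m ∉ B, (∀ b ∈ B, LexLt (wt b) (wt m) → f b = 0) → f m = 0 :=
    fun m hm h => apply_eq_zero_of_col_mem_span hf (hspan m hm) fun b hb => h b hb.1 hb.2
  have hsupp : {b ∈ B | f b ≠ 0}.Nonempty := by
    by_contra! h
    refine hne (funext fun m => ?_)
    have hB : ∀ b ∈ B, f b = 0 := fun b hb => by_contra fun hfb => h.subset ⟨hb, hfb⟩
    by_cases hm : m ∈ B
    · exact hB m hm
    · exact vanish_off_basis m hm fun b hb _ => hB b hb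
  obtain ⟨b₀, ⟨hb₀B, hb₀⟩, hmin⟩ :=
    (InvImage.wf (fun m => toLex (wt m)) wellFounded_lt).has_min _ hsupp
  refine ⟨b₀, hb₀, fun m hw hm => by_contra fun hne' => ?_⟩
  by_cases hmB : m ∈ B
  · exact hdist m hmB b₀ hb₀B hne' hw
  · -- `LexLt` is definitionally `<` on `Lex (Fin k → ℕ)`
    exact hm <| vanish_off_basis m hmB fun b hb hlt =>
      by_contra fun hfb => hmin b ⟨hb, hfb⟩ (by rw [hw] at hlt; exact hlt)

theorem coeff_substWt {F : Type*} [Field F] {n k : ℕ} (wt : Fin n → Fin k → ℕ)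
    (f : Finset (Fin n) → F) (w : Fin k → ℕ) :
    coeff (Finsupp.equivFunOnFinite.symm w) (substWt wt f) = ∑ S with ∑ x ∈ S, wt x = w, f S := by
  classical
  simp only [substWt, coeff_sum, coeff_monomial, Finset.sum_ite, Finset.sum_const_zero, add_zero]
  refine Finset.sum_congr (Finset.filter_congr fun S _ => ?_) fun _ _ => rfl
  exact Finsupp.equivFunOnFinite.symm_apply_eq

theorem biwa_preserves_nonzero_general {F : Type*} [Field F] {n k : ℕ}
    (V : Submodule F (Finset (Fin n) → F))
    (wt : Fin n → Fin k → ℕ)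
    (hbiwa : IsBIWA (fun S : Finset (Fin n) => ∑ x ∈ S, wt x) V)
    (f : Finset (Fin n) → F) (hf : f ∈ V) :
    f ≠ 0 ↔ substWt wt f ≠ 0 := by
  refine ⟨fun hne hsubst => ?_, fun hsubst hf0 => hsubst (by simp [hf0, substWt])⟩
  obtain ⟨m₀, hm₀, huniq⟩ := hbiwa.exists_apply_ne_zero_forall_weight_eq hf hne
  have hcoeff : coeff (Finsupp.equivFunOnFinite.symm (∑ x ∈ m₀, wt x)) (substWt wt f) = f m₀ := by
    rw [coeff_substWt]
    refine Finset.sum_eq_single_of_mem m₀ (by simp) fun S hS hSm₀ => by_contra fun hfS => ?_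
    exact hSm₀ (huniq S (Finset.mem_filter.mp hS).2 hfS)
  rw [hsubst, coeff_zero] at hcoeff
  exact hm₀ hcoeff.symm

/-- if `wt : y → [M]^k` is a BIWA for the space `V` of (multilinear)
polynomials, then for every `f ∈ V`, `f ≠ 0` iff
`f(t^{wt(y_1)}, …, t^{wt(y_n)}) ≠ 0`. -/
theorem biwa_preserves_nonzero {F : Type*} [Field F] {n k M : ℕ}
    (V : Submodule F (Finset (Fin n) → F))
    (wt : Fin n → Fin k → ℕ) (hM : ∀ x j, 1 ≤ wt x j ∧ wt x j ≤ M)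
    (hbiwa : IsBIWA (fun S : Finset (Fin n) => ∑ x ∈ S, wt x) V)
    (f : Finset (Fin n) → F) (hf : f ∈ V) :
    f ≠ 0 ↔ substWt wt f ≠ 0 :=
  biwa_preserves_nonzero_general V wt hbiwa f hf
end
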